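/- Let p ≥ 3 be prime and 2 ≤ a ≤ p − 1. The linear Alexander quandle Λ_p/(t − a) is of cyclic type if and only if a is a primitive root modulo p (i.e., a generates the multiplicative group (ℤ/pℤ)^×). -/

import Mathlib

/-- A quandle given by a family of permutations `s x` satisfying
`s x x = x` and `s x ∘ s y = s (s x y) ∘ s x`. -/
structure SQuandle (X : Type*) where
  s : X → Equiv.Perm X
  fix : ∀ x, s x x = x
  dist : ∀ x y, s x * s y = s (s x y) * s x

/-- The inner automorphism group: the subgroup of permutations generated by the `s x`. -/
def Inn {X : Type*} (s : X → Equiv.Perm X) : Subgroup (Equiv.Perm X) :=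
  Subgroup.closure (Set.range s)

/-- Two-point homogeneity with respect to the inner automorphism group. -/
def TwoPointHomogeneous {X : Type*} (s : X → Equiv.Perm X) : Prop :=
  ∀ x₁ x₂ y₁ y₂ : X, x₁ ≠ x₂ → y₁ ≠ y₂ →
    ∃ f ∈ Inn s, f x₁ = y₁ ∧ f x₂ = y₂

/-- Connectedness: the inner automorphism group acts transitively. -/
def QConnected {X : Type*} (s : X → Equiv.Perm X) : Prop :=
  ∀ x y : X, ∃ f ∈ Inn s, f x = y

/-- Cyclic type: each `s x` acts on `X \ {x}` as a single cycle of order `#X - 1`,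
i.e. `s x` is a cycle whose support is the complement of `{x}`. -/
def CyclicType {X : Type*} [Fintype X] [DecidableEq X] (s : X → Equiv.Perm X) : Prop :=
  ∀ x : X, (s x).IsCycle ∧ (s x).support = {x}ᶜ

/-- The symmetry `y ↦ a*y + (1-a)*x` of the linear Alexander quandle
`Λ_p/(t-a)` on `ZMod p` (`p` prime, `a ≠ 0`). -/
def alexS (p : ℕ) [Fact p.Prime] (a : ZMod p) (ha : a ≠ 0) (x : ZMod p) :
    Equiv.Perm (ZMod p) where
  toFun y := a * y + (1 - a) * x
  invFun y := a⁻¹ * (y - (1 - a) * x)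
  left_inv y := by field_simp; ring
  right_inv y := by field_simp; ring

/-! Since `s_x^n y = x + a^n (y - x)`, the orbit of `x + 1` under `s_x` is `x + ⟨a⟩`; so `s_x` is a
single cycle on the complement of `x` exactly when the powers of `a` exhaust `(ℤ/pℤ)ˣ`, i.e. when
`a` has order `p - 1`. -/

theorem forall_mem_powers_iff_orderOf_eq_card {G : Type*} [Group G] [Finite G] (g : G) :
    (∀ x : G, x ∈ Submonoid.powers g) ↔ orderOf g = Nat.card G := by
  simp_rw [mem_powers_iff_mem_zpowers, ← Subgroup.eq_top_iff', ← Nat.card_zpowers,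
    Subgroup.card_eq_iff_eq_top]

theorem forall_exists_pow_eq_iff_orderOf_eq {G₀ : Type*} [GroupWithZero G₀] [Finite G₀] {a : G₀}
    (ha : a ≠ 0) : (∀ y ≠ 0, ∃ n : ℕ, a ^ n = y) ↔ orderOf a = Nat.card G₀ - 1 := by
  have hu : orderOf a = orderOf (Units.mk0 a ha) := orderOf_units (y := Units.mk0 a ha)
  rw [← Nat.card_units, hu, ← forall_mem_powers_iff_orderOf_eq_card]
  simp only [Submonoid.mem_powers_iff, Units.ext_iff, Units.val_pow_eq_pow_val, Units.val_mk0]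
  exact ⟨fun h v ↦ h v v.ne_zero, fun h y hy ↦ h (Units.mk0 y hy)⟩

section Alexander

variable {p : ℕ} [Fact p.Prime] {a : ZMod p} (ha : a ≠ 0)

theorem alexS_apply (x y : ZMod p) : alexS p a ha x y = a * y + (1 - a) * x := rfl

theorem alexS_pow_apply (x : ZMod p) (n : ℕ) (y : ZMod p) :
    (alexS p a ha x ^ n) y = a ^ n * (y - x) + x := by
  induction n with
  | zero => simp
  | succ n ih =>
    rw [pow_succ', Equiv.Perm.mul_apply, ih, alexS_apply]
    ring

theorem alexS_apply_eq_self_iff (ha1 : a ≠ 1) (x y : ZMod p) :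
    alexS p a ha x y = y ↔ y = x := by
  rw [alexS_apply, ← sub_eq_zero, ← sub_eq_zero (a := y)]
  have : a * y + (1 - a) * x - y = (a - 1) * (y - x) := by ring
  rw [this, mul_eq_zero, sub_eq_zero, or_iff_right ha1]

theorem support_alexS (ha1 : a ≠ 1) (x : ZMod p) : (alexS p a ha x).support = {x}ᶜ := by
  ext y
  simp [Equiv.Perm.mem_support, alexS_apply_eq_self_iff ha ha1]

theorem isCycle_alexS_iff (ha1 : a ≠ 1) (x : ZMod p) :
    (alexS p a ha x).IsCycle ↔ ∀ y ≠ 0, ∃ n : ℕ, a ^ n = y := by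
  have moved : ∀ y, alexS p a ha x (x + y) ≠ x + y ↔ y ≠ 0 := fun y ↦ by
    simp [alexS_apply_eq_self_iff ha ha1]
  constructor
  · intro hc y hy
    obtain ⟨n, hn⟩ := hc.exists_pow_eq ((moved 1).2 one_ne_zero) ((moved y).2 hy)
    refine ⟨n, ?_⟩
    simpa [alexS_pow_apply, add_comm x] using hn
  · intro h
    refine ⟨x + 1, (moved 1).2 one_ne_zero, fun z hz ↦ ?_⟩
    obtain ⟨n, hn⟩ := h (z - x) (sub_ne_zero.2 ((alexS_apply_eq_self_iff ha ha1 x z).not.1 hz))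
    refine ⟨n, ?_⟩
    rw [zpow_natCast, alexS_pow_apply, hn]
    ring

end Alexander

theorem alex_cyclicType_iff_primitiveRoot_general (p : ℕ) [Fact p.Prime]
    (a : ZMod p) (ha : a ≠ 0) (ha1 : a ≠ 1) :
    CyclicType (alexS p a ha) ↔ orderOf a = p - 1 := by
  simp only [CyclicType, support_alexS ha ha1, and_true, isCycle_alexS_iff ha ha1, forall_const]
  rw [forall_exists_pow_eq_iff_orderOf_eq ha, Nat.card_zmod]

/-- for `p ≥ 3` prime and `a ≠ 0, 1`, the linear Alexander quandle
`Λ_p/(t-a)` is of cyclic type iff `a` is a primitive root modulo `p`. -/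
theorem alex_cyclicType_iff_primitiveRoot (p : ℕ) [Fact p.Prime] (hp : 3 ≤ p)
    (a : ZMod p) (ha : a ≠ 0) (ha1 : a ≠ 1) :
    CyclicType (alexS p a ha) ↔ orderOf a = p - 1 :=
  alex_cyclicType_iff_primitiveRoot_general p a ha ha1
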